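/- Let F be a finite field and set r = 1 − 1/|F|. Let m ≥ 3 be a natural number and c > 0 a real number. On a probability space, let W₁, …, W_m be mutually independent real-valued random variables, each with law having probability density z ↦ ν(z − log₂(c/m), r) with respect to Lebesgue measure. Define the estimator Ẑ = φ(1/m, r)^{−m} · m · 2^{(1/m)·Σ_{i=1}^m W_i}. Then the variance of Ẑ equals Var(Ẑ) = (φ(1/m, r)^{−2m} · φ(2/m, r)^{m} − 1) · c². -/

import Mathlib

/-!
Since `2 ^ x = exp (x log 2)`, the estimator is `K · exp (θ S)` with `S = ∑ Wᵢ` and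
`θ = log 2 / m`, so its variance is `K² (M_S(2θ) - M_S(θ)²)` for the moment generating
function `M_S` of `S`. Independence gives `M_S = M_W ^ m`, and shifting the density by
`s = log₂ (c/m)` gives `M_W (t log 2) = 2^{ts} φ(t, r)`; at `t = k/m` the `m`-th power is
`(c/m)^k φ(k/m, r)^m`. The analytic input is that `φ(t, r)` is finite and positive for
`0 ≤ t < 1` (hence `m ≥ 3`, so that `2/m < 1`): `ν(z) ≤ 2^{-z}` for large `z`, while for very
negative `z` about `-z` factors of the product are at most `q = 1 - (1 - e⁻²) r < 1`, so
`ν(z) ≤ q^{-z-2}`.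
-/

open MeasureTheory ProbabilityTheory

/-- The density `ν(z, r)` of the highest position of an F-PCSA subsketch. -/
noncomputable def nu (z r : ℝ) : ℝ :=
  (1 - Real.exp (-(2:ℝ) ^ (-z))) * r *
    ∏' j : ℕ, (1 - (1 - Real.exp (-(2:ℝ) ^ (-z - ((j : ℝ) + 1)))) * r)

/-- `φ(t, r) = ∫ 2^{tz} ν(z, r) dz`. -/
noncomputable def phi (t r : ℝ) : ℝ := ∫ z : ℝ, (2:ℝ) ^ (t * z) * nu z r

open Real Set Filter

lemma Real.tprod_pos_of_summable_sub_one {ι : Type*} {a : ι → ℝ} (ha : ∀ i, 0 < a i)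
    (hs : Summable fun i => a i - 1) : 0 < ∏' i, a i := by
  have hlog : Summable fun i => log (a i) := by
    simpa using summable_log_one_add_of_summable hs
  rw [← rexp_tsum_eq_tprod ha hlog]
  exact exp_pos _

lemma tprod_le_prod_range_of_le_one {a : ℕ → ℝ} (ha : Multipliable a) (h0 : ∀ j, 0 ≤ a j)
    (h1 : ∀ j, a j ≤ 1) (n : ℕ) : ∏' j, a j ≤ ∏ j ∈ Finset.range n, a j := by
  refine le_of_tendsto ha.hasProd ?_
  filter_upwards [eventually_ge_atTop (Finset.range n)] with s hs
  rw [← Finset.prod_sdiff hs]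
  exact mul_le_of_le_one_left (Finset.prod_nonneg fun j _ => h0 j)
    (Finset.prod_le_one (fun j _ => h0 j) fun j _ => h1 j)

/-- `1 - e^{-2^{-x}}` is the probability that a Poisson variable of mean `2^{-x}` is nonzero. -/
noncomputable def hitProb (x : ℝ) : ℝ := 1 - exp (-(2:ℝ) ^ (-x))

lemma nu_eq_hitProb_mul_tprod (z r : ℝ) :
    nu z r = hitProb z * r * ∏' j : ℕ, (1 - hitProb (z + (j + 1)) * r) := by
  simp only [nu, hitProb, neg_add']

lemma hitProb_pos (x : ℝ) : 0 < hitProb x := by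
  have : exp (-(2:ℝ) ^ (-x)) < 1 := exp_lt_one_iff.2 (neg_neg_of_pos (by positivity))
  unfold hitProb
  linarith

lemma hitProb_le_one (x : ℝ) : hitProb x ≤ 1 := by
  unfold hitProb
  linarith [exp_pos (-(2:ℝ) ^ (-x))]

lemma hitProb_le_two_rpow (x : ℝ) : hitProb x ≤ 2 ^ (-x) := by
  unfold hitProb
  linarith [add_one_le_exp (-(2:ℝ) ^ (-x))]

lemma one_sub_exp_neg_two_le_hitProb {x : ℝ} (hx : x ≤ -1) : 1 - exp (-2) ≤ hitProb x := by
  have : (2:ℝ) ≤ 2 ^ (-x) := by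
    simpa using rpow_le_rpow_of_exponent_le one_le_two (by linarith : (1:ℝ) ≤ -x)
  unfold hitProb
  gcongr

lemma two_rpow_neg_add_succ (z : ℝ) (j : ℕ) :
    (2:ℝ) ^ (-(z + (j + 1))) = 2 ^ (-(z + 1)) * (1 / 2) ^ j := by
  rw [show -(z + (j + 1)) = -(z + 1) + -(j : ℝ) by ring, rpow_add two_pos,
    rpow_neg zero_le_two (j : ℝ), rpow_natCast, one_div, inv_pow]

@[fun_prop]
lemma measurable_nu (r : ℝ) : Measurable fun z => nu z r := by
  unfold nu
  fun_prop

lemma summable_hitProb_succ (z : ℝ) : Summable fun j : ℕ => hitProb (z + (j + 1)) := by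
  refine Summable.of_nonneg_of_le (fun j => (hitProb_pos _).le) (fun j => ?_)
    (summable_geometric_two.mul_left ((2:ℝ) ^ (-(z + 1))))
  rw [← two_rpow_neg_add_succ]
  exact hitProb_le_two_rpow _

lemma multipliable_one_sub_hitProb_mul (z r : ℝ) :
    Multipliable fun j : ℕ => 1 - hitProb (z + (j + 1)) * r := by
  simpa [sub_eq_add_neg] using
    Real.multipliable_one_add_of_summable ((summable_hitProb_succ z).mul_right r).neg

section nu

variable {r : ℝ}

lemma one_sub_hitProb_mul_pos (hr0 : 0 ≤ r) (hr1 : r < 1) (x : ℝ) : 0 < 1 - hitProb x * r := by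
  nlinarith [hitProb_pos x, hitProb_le_one x]

lemma one_sub_hitProb_mul_le_one (hr0 : 0 ≤ r) (x : ℝ) : 1 - hitProb x * r ≤ 1 := by
  nlinarith [hitProb_pos x]

lemma tprod_one_sub_hitProb_mul_pos (hr0 : 0 ≤ r) (hr1 : r < 1) (z : ℝ) :
    0 < ∏' j : ℕ, (1 - hitProb (z + (j + 1)) * r) :=
  Real.tprod_pos_of_summable_sub_one (fun _ => one_sub_hitProb_mul_pos hr0 hr1 _)
    (by simpa using ((summable_hitProb_succ z).mul_right r).neg)

lemma tprod_one_sub_hitProb_mul_le_prod_range (hr0 : 0 ≤ r) (hr1 : r < 1) (z : ℝ) (n : ℕ) :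
    ∏' j : ℕ, (1 - hitProb (z + (j + 1)) * r) ≤
      ∏ j ∈ Finset.range n, (1 - hitProb (z + (j + 1)) * r) :=
  tprod_le_prod_range_of_le_one (multipliable_one_sub_hitProb_mul z r)
    (fun _ => (one_sub_hitProb_mul_pos hr0 hr1 _).le) (fun _ => one_sub_hitProb_mul_le_one hr0 _) n

lemma tprod_one_sub_hitProb_mul_le_one (hr0 : 0 ≤ r) (hr1 : r < 1) (z : ℝ) :
    ∏' j : ℕ, (1 - hitProb (z + (j + 1)) * r) ≤ 1 := by
  simpa using tprod_one_sub_hitProb_mul_le_prod_range hr0 hr1 z 0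

lemma nu_pos (hr0 : 0 < r) (hr1 : r < 1) (z : ℝ) : 0 < nu z r := by
  rw [nu_eq_hitProb_mul_tprod]
  have := tprod_one_sub_hitProb_mul_pos hr0.le hr1 z
  have := hitProb_pos z
  positivity

lemma nu_le_mul_tprod (hr0 : 0 ≤ r) (hr1 : r < 1) (z : ℝ) :
    nu z r ≤ hitProb z * ∏' j : ℕ, (1 - hitProb (z + (j + 1)) * r) := by
  rw [nu_eq_hitProb_mul_tprod]
  have := tprod_one_sub_hitProb_mul_pos hr0 hr1 z
  have := hitProb_pos z
  gcongr
  exact mul_le_of_le_one_right (hitProb_pos z).le hr1.le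

lemma nu_le_two_rpow (hr0 : 0 ≤ r) (hr1 : r < 1) (z : ℝ) : nu z r ≤ 2 ^ (-z) :=
  calc nu z r ≤ hitProb z * ∏' j : ℕ, (1 - hitProb (z + (j + 1)) * r) := nu_le_mul_tprod hr0 hr1 z
    _ ≤ hitProb z := mul_le_of_le_one_right (hitProb_pos z).le
          (tprod_one_sub_hitProb_mul_le_one hr0 hr1 z)
    _ ≤ 2 ^ (-z) := hitProb_le_two_rpow z

lemma nu_le_rpow (hr0 : 0 ≤ r) (hr1 : r < 1) (z : ℝ) :
    nu z r ≤ (1 - (1 - exp (-2)) * r) ^ (-z - 2) := by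
  set q := 1 - (1 - exp (-2)) * r
  have hq0 : 0 < q := by nlinarith [exp_pos (-2)]
  have hq1 : q ≤ 1 := by nlinarith [exp_lt_one_iff.2 (by norm_num : (-2:ℝ) < 0)]
  set n := ⌈-z - 2⌉₊
  have hfactor : ∀ j ∈ Finset.range n, 1 - hitProb (z + (j + 1)) * r ≤ q := by
    intro j hj
    rw [Finset.mem_range, Nat.lt_ceil] at hj
    have := one_sub_exp_neg_two_le_hitProb (x := z + (j + 1)) (by linarith)
    simp only [q]
    gcongr
  calc nu z r ≤ hitProb z * ∏' j : ℕ, (1 - hitProb (z + (j + 1)) * r) := nu_le_mul_tprod hr0 hr1 z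
    _ ≤ ∏' j : ℕ, (1 - hitProb (z + (j + 1)) * r) :=
        mul_le_of_le_one_left (tprod_one_sub_hitProb_mul_pos hr0 hr1 z).le (hitProb_le_one z)
    _ ≤ ∏ j ∈ Finset.range n, (1 - hitProb (z + (j + 1)) * r) :=
        tprod_one_sub_hitProb_mul_le_prod_range hr0 hr1 z n
    _ ≤ ∏ _j ∈ Finset.range n, q :=
        Finset.prod_le_prod (fun _ _ => (one_sub_hitProb_mul_pos hr0 hr1 _).le) hfactor
    _ = q ^ (n : ℝ) := by rw [Finset.prod_const, Finset.card_range, rpow_natCast]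
    _ ≤ q ^ (-z - 2) := rpow_le_rpow_of_exponent_ge hq0 hq1 (Nat.le_ceil _)

end nu

section phi

variable {r t : ℝ}

lemma integrable_two_rpow_mul_nu (hr0 : 0 < r) (hr1 : r < 1) (ht0 : 0 ≤ t) (ht1 : t < 1) :
    Integrable fun z => (2:ℝ) ^ (t * z) * nu z r := by
  set q := 1 - (1 - exp (-2)) * r
  have hq0 : 0 < q := by nlinarith [exp_pos (-2)]
  have hlogq : log q < 0 := log_neg hq0 (by nlinarith [exp_lt_one_iff.2 (by norm_num : (-2:ℝ) < 0)])
  have hlog2 : 0 < log 2 := log_pos one_lt_two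
  have hmeas : AEStronglyMeasurable (fun z => (2:ℝ) ^ (t * z) * nu z r) :=
    (by fun_prop : Measurable fun z : ℝ => (2:ℝ) ^ (t * z)).mul (measurable_nu r)
      |>.aestronglyMeasurable
  have hnorm (z : ℝ) : ‖(2:ℝ) ^ (t * z) * nu z r‖ = (2:ℝ) ^ (t * z) * nu z r :=
    norm_of_nonneg (by have := nu_pos hr0 hr1 z; positivity)
  rw [← integrableOn_univ, ← Iic_union_Ioi (a := (0:ℝ))]
  refine IntegrableOn.union ?_ ?_
  · refine Integrable.mono' (((integrableOn_exp_mul_Iic (a := t * log 2 - log q) (by nlinarith) 0)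
      ).const_mul (q ^ (-2 : ℝ))) hmeas.restrict (.of_forall fun z => ?_)
    rw [hnorm]
    calc (2:ℝ) ^ (t * z) * nu z r ≤ 2 ^ (t * z) * q ^ (-z - 2) := by
          gcongr; exact nu_le_rpow hr0.le hr1 z
      _ = q ^ (-2 : ℝ) * exp ((t * log 2 - log q) * z) := by
          rw [rpow_def_of_pos two_pos, rpow_def_of_pos hq0, rpow_def_of_pos hq0, ← exp_add,
            ← exp_add]
          ring_nf
  · refine Integrable.mono' (exp_neg_integrableOn_Ioi 0 (b := (1 - t) * log 2) (by nlinarith))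
      hmeas.restrict (.of_forall fun z => ?_)
    rw [hnorm]
    calc (2:ℝ) ^ (t * z) * nu z r ≤ 2 ^ (t * z) * 2 ^ (-z) := by
          gcongr; exact nu_le_two_rpow hr0.le hr1 z
      _ = exp (-((1 - t) * log 2) * z) := by
          rw [rpow_def_of_pos two_pos, rpow_def_of_pos two_pos, ← exp_add]
          ring_nf

lemma phi_pos (hr0 : 0 < r) (hr1 : r < 1) (ht0 : 0 ≤ t) (ht1 : t < 1) : 0 < phi t r := by
  have hpos (z : ℝ) : 0 < (2:ℝ) ^ (t * z) * nu z r := by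
    have := nu_pos hr0 hr1 z
    positivity
  rw [phi, integral_pos_iff_support_of_nonneg (fun z => (hpos z).le)
    (integrable_two_rpow_mul_nu hr0 hr1 ht0 ht1), Function.support_eq_univ fun z => (hpos z).ne']
  simp

end phi

section law

variable {Ω : Type*} [MeasurableSpace Ω] {μ : Measure Ω} {X : Ω → ℝ} {f g : ℝ → ℝ}

lemma integrable_comp_iff_of_map_eq_withDensity (hX : Measurable X) (hf : Measurable f)
    (hf0 : ∀ z, 0 ≤ f z) (hg : Measurable g)
    (hlaw : μ.map X = volume.withDensity fun z => ENNReal.ofReal (f z)) :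
    Integrable (fun ω => g (X ω)) μ ↔ Integrable fun z => f z * g z := by
  rw [← Function.comp_def, ← integrable_map_measure hg.aestronglyMeasurable hX.aemeasurable, hlaw,
    integrable_withDensity_iff_integrable_smul' hf.ennreal_ofReal
      (.of_forall fun _ => ENNReal.ofReal_lt_top)]
  simp [ENNReal.toReal_ofReal (hf0 _)]

lemma integral_comp_of_map_eq_withDensity (hX : Measurable X) (hf : Measurable f)
    (hf0 : ∀ z, 0 ≤ f z) (hg : Measurable g)
    (hlaw : μ.map X = volume.withDensity fun z => ENNReal.ofReal (f z)) :
    ∫ ω, g (X ω) ∂μ = ∫ z, f z * g z := by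
  rw [← integral_map hX.aemeasurable hg.aestronglyMeasurable, hlaw,
    integral_withDensity_eq_integral_toReal_smul hf.ennreal_ofReal
      (.of_forall fun _ => ENNReal.ofReal_lt_top)]
  simp [ENNReal.toReal_ofReal (hf0 _)]

lemma nu_sub_mul_exp (r s t z : ℝ) :
    nu (z - s) r * exp (t * log 2 * z) = 2 ^ (t * s) * (2 ^ (t * (z - s)) * nu (z - s) r) := by
  rw [rpow_def_of_pos two_pos, rpow_def_of_pos two_pos, ← mul_assoc, ← exp_add]
  ring_nf

variable {r s : ℝ} (hr0 : 0 < r) (hr1 : r < 1) (hX : Measurable X)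
  (hlaw : μ.map X = volume.withDensity fun z => ENNReal.ofReal (nu (z - s) r))
include hr0 hr1 hX hlaw

lemma integrable_exp_mul_of_map_eq_nu {t : ℝ} (ht0 : 0 ≤ t) (ht1 : t < 1) :
    Integrable (fun ω => exp (t * log 2 * X ω)) μ := by
  rw [integrable_comp_iff_of_map_eq_withDensity (g := fun x => exp (t * log 2 * x)) hX
    (by fun_prop) (fun z => (nu_pos hr0 hr1 _).le) (by fun_prop) hlaw]
  simp_rw [nu_sub_mul_exp]
  exact ((integrable_two_rpow_mul_nu hr0 hr1 ht0 ht1).comp_sub_right s).const_mul _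

lemma mgf_of_map_eq_nu (t : ℝ) : mgf X μ (t * log 2) = 2 ^ (t * s) * phi t r := by
  rw [mgf, integral_comp_of_map_eq_withDensity (g := fun x => exp (t * log 2 * x)) hX
    (by fun_prop) (fun z => (nu_pos hr0 hr1 _).le) (by fun_prop) hlaw]
  simp_rw [nu_sub_mul_exp, integral_const_mul]
  rw [integral_sub_right_eq_self (fun z => (2:ℝ) ^ (t * z) * nu z r) s, phi]

end law

lemma variance_const_mul_exp_mul {Ω : Type*} [MeasurableSpace Ω] {μ : Measure Ω}
    [IsProbabilityMeasure μ] {X : Ω → ℝ} (hX : AEMeasurable X μ) (K θ : ℝ)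
    (hint : Integrable (fun ω => exp (2 * θ * X ω)) μ) :
    variance (fun ω => K * exp (θ * X ω)) μ = K ^ 2 * (mgf X μ (2 * θ) - mgf X μ θ ^ 2) := by
  have hsq (ω : Ω) : exp (θ * X ω) ^ 2 = exp (2 * θ * X ω) := by
    rw [← exp_nat_mul]
    ring_nf
  have hmem : MemLp (fun ω => exp (θ * X ω)) 2 μ := by
    rw [memLp_two_iff_integrable_sq (by fun_prop)]
    simpa only [hsq] using hint
  rw [variance_const_mul, variance_eq_sub hmem]
  simp only [Pi.pow_apply, hsq]
  rfl

section sum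

variable {Ω ι : Type*} [MeasurableSpace Ω] {μ : Measure Ω} [Fintype ι] {W : ι → Ω → ℝ} {r s : ℝ}
  (hr0 : 0 < r) (hr1 : r < 1) (hW : ∀ i, Measurable (W i)) (hindep : iIndepFun W μ)
  (hlaw : ∀ i, μ.map (W i) = volume.withDensity fun z => ENNReal.ofReal (nu (z - s) r))
include hr0 hr1 hW hindep hlaw

lemma integrable_exp_mul_sum_of_map_eq_nu {t : ℝ} (ht0 : 0 ≤ t) (ht1 : t < 1) :
    Integrable (fun ω => exp (t * log 2 * (∑ i, W i) ω)) μ :=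
  have := hindep.isProbabilityMeasure
  hindep.integrable_exp_mul_sum hW fun i _ =>
    integrable_exp_mul_of_map_eq_nu hr0 hr1 (hW i) (hlaw i) ht0 ht1

lemma mgf_sum_of_map_eq_nu (t : ℝ) :
    mgf (∑ i, W i) μ (t * log 2) = (2 ^ (t * s) * phi t r) ^ Fintype.card ι := by
  rw [hindep.mgf_sum hW,
    Finset.prod_congr rfl fun i _ => mgf_of_map_eq_nu hr0 hr1 (hW i) (hlaw i) t,
    Finset.prod_const, Finset.card_univ]

end sum

lemma one_sub_inv_card_pos_and_lt_one (α : Type*) [Fintype α] [Nontrivial α] :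
    0 < 1 - (Fintype.card α : ℝ)⁻¹ ∧ 1 - (Fintype.card α : ℝ)⁻¹ < 1 := by
  have hcard : (1:ℝ) < Fintype.card α := by exact_mod_cast Fintype.one_lt_card
  constructor
  · linarith [inv_lt_one_of_one_lt₀ hcard]
  · linarith [inv_pos.2 (zero_lt_one.trans hcard)]

/-- Variance of the F-PCSA estimator: if `W₁, …, W_m` are independent,
each with density `z ↦ ν(z − log₂(c/m), 1 − |F|⁻¹)`, then the estimator
`Ẑ = φ(1/m, r)^{−m} m 2^{(1/m) ∑ Wᵢ}` satisfies
`Var(Ẑ) = (φ(1/m, r)^{−2m} φ(2/m, r)^{m} − 1) c²`. -/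
theorem stmt_8 (F : Type*) [Field F] [Fintype F]
    (m : ℕ) (hm : 3 ≤ m) (c : ℝ) (hc : 0 < c)
    (Ω : Type*) [MeasurableSpace Ω] (μ : Measure Ω) [IsProbabilityMeasure μ]
    (W : Fin m → Ω → ℝ) (hWmeas : ∀ i, Measurable (W i))
    (hindep : iIndepFun W μ)
    (hWlaw : ∀ i, μ.map (W i) = volume.withDensity
      (fun z => ENNReal.ofReal (nu (z - Real.logb 2 (c / m)) (1 - (Fintype.card F : ℝ)⁻¹)))) :
    variance
      (fun ω => (phi (1 / m) (1 - (Fintype.card F : ℝ)⁻¹) ^ m)⁻¹ * m *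
        (2:ℝ) ^ ((1 / (m:ℝ)) * ∑ i, W i ω)) μ
      = ((phi (1 / m) (1 - (Fintype.card F : ℝ)⁻¹) ^ (2 * m))⁻¹ *
          phi (2 / m) (1 - (Fintype.card F : ℝ)⁻¹) ^ m - 1) * c ^ 2 := by
  obtain ⟨hr0, hr1⟩ := one_sub_inv_card_pos_and_lt_one F
  set r := 1 - (Fintype.card F : ℝ)⁻¹
  have hm0 : (0:ℝ) < m := by positivity
  have hm3 : (3:ℝ) ≤ m := by exact_mod_cast hm
  have h1m : 1 / (m:ℝ) < 1 := (div_lt_one hm0).2 (by linarith)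
  have h2m : 2 / (m:ℝ) < 1 := (div_lt_one hm0).2 (by linarith)
  have hmgf (k : ℕ) : mgf (∑ i, W i) μ (k / m * log 2) = (c / m) ^ k * phi (k / m) r ^ m := by
    rw [mgf_sum_of_map_eq_nu hr0 hr1 hWmeas hindep hWlaw, Fintype.card_fin, mul_pow,
      ← rpow_natCast (2 ^ _), ← rpow_mul zero_le_two, mul_right_comm, div_mul_cancel₀ _ hm0.ne',
      mul_comm (k : ℝ), rpow_mul zero_le_two, rpow_logb two_pos (by norm_num) (by positivity),
      rpow_natCast]
  have hestimator : (fun ω => (phi (1 / m) r ^ m)⁻¹ * m * (2:ℝ) ^ ((1 / (m:ℝ)) * ∑ i, W i ω)) =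
      fun ω => (phi (1 / m) r ^ m)⁻¹ * m * exp (1 / m * log 2 * (∑ i, W i) ω) := by
    ext ω
    rw [rpow_def_of_pos two_pos, Finset.sum_apply]
    ring_nf
  have h2θ : 2 * (1 / m * log 2) = 2 / m * log 2 := by ring
  rw [hestimator, variance_const_mul_exp_mul (by fun_prop) _ _ (h2θ ▸
    integrable_exp_mul_sum_of_map_eq_nu hr0 hr1 hWmeas hindep hWlaw (by positivity) h2m), h2θ]
  have h1 := hmgf 1
  have h2 := hmgf 2
  push_cast at h1 h2
  rw [h1, h2]
  have := (phi_pos hr0 hr1 (by positivity) h1m).ne'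
  field_simp
  ring
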